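/- arXiv:1804.10546 — 6 statements merged into one kernel-verified Lean document; each statement's English description precedes it below -/
import Mathlib

section
/- Let G and H be groups, P a unital subsemigroup of G, and γ : G → H a group homomorphism that is injective on P. Let p₁,…,p_{2k} ∈ P and set F = {p_{2k}⁻¹p_{2k-1}, p_{2k}⁻¹p_{2k-1}p_{2k-2}⁻¹p_{2k-3}, …, p_{2k}⁻¹p_{2k-1}···p₂⁻¹p₁} ⊆ G. Then an element r ∈ P satisfies r ∈ ⋂_{g∈F} γ(g)·γ(P) (inside H) if and only if r ∈ ⋂_{g∈F} gP (inside G); that is, K_{γ(F)} ∩ γ(P) = γ(K_F ∩ P). -/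
/-- Let `γ : G → H` be a group homomorphism injective on a unital
subsemigroup `P ⊆ G`, let `p₁, …, p_{2k} ∈ P` (here `p i` is `p_{i+1}`), and let
`F = {p_{2k}⁻¹p_{2k-1}, p_{2k}⁻¹p_{2k-1}p_{2k-2}⁻¹p_{2k-3}, …, p_{2k}⁻¹p_{2k-1}⋯p₂⁻¹p₁}`.
Then `r ∈ P` lies in `⋂_{g ∈ F} γ(g)·γ(P)` (inside `H`) if and only if it lies in
`⋂_{g ∈ F} gP` (inside `G`); that is, `K_{γ(F)} ∩ γ(P) = γ(K_F ∩ P)`. -/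
theorem mem_K_image_iff {G H : Type*} [Group G] [Group H] (P : Submonoid G)
    (γ : G →* H) (hγ : Set.InjOn γ (P : Set G)) (k : ℕ) (p : ℕ → G)
    (hp : ∀ i < 2 * k, p i ∈ P) (r : G) (hr : r ∈ P) :
    (∀ j < k, ∃ x ∈ P,
        γ r = γ (((List.range (j + 1)).map fun i =>
          (p (2 * k - 1 - 2 * i))⁻¹ * p (2 * k - 2 - 2 * i)).prod) * γ x) ↔
      (∀ j < k, ∃ x ∈ P,
        r = (((List.range (j + 1)).map fun i =>
          (p (2 * k - 1 - 2 * i))⁻¹ * p (2 * k - 2 - 2 * i)).prod) * x) := by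
  set f : ℕ → G := fun i => (p (2 * k - 1 - 2 * i))⁻¹ * p (2 * k - 2 - 2 * i) with hfdef
  have hL : ∀ j : ℕ, ((List.range (j + 1 + 1)).map f).prod
      = ((List.range (j + 1)).map f).prod * f (j + 1) := by
    intro j
    rw [List.range_succ, List.map_append, List.prod_append]
    simp
  constructor
  · intro h
    have key : ∀ j, j < k → ∃ x ∈ P, r = ((List.range (j + 1)).map f).prod * x := by
      intro j
      induction j with
      | zero =>
        intro hj
        obtain ⟨x, hx, hgx⟩ := h 0 hj
        have hL0 : ((List.range 1).map f).prod = f 0 := by simp [List.range_succ]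
        rw [hL0] at hgx ⊢
        have e1 : γ (p (2 * k - 1 - 2 * 0) * r) = γ (p (2 * k - 2 - 2 * 0) * x) := by
          rw [map_mul, map_mul, hgx]
          simp only [hfdef, map_mul, map_inv]
          group
        have e2 : p (2 * k - 1 - 2 * 0) * r = p (2 * k - 2 - 2 * 0) * x :=
          hγ (mul_mem (hp _ (by omega)) hr) (mul_mem (hp _ (by omega)) hx) e1
        refine ⟨x, hx, ?_⟩
        rw [hfdef]
        calc r = (p (2 * k - 1 - 2 * 0))⁻¹ * (p (2 * k - 1 - 2 * 0) * r) := by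
                rw [inv_mul_cancel_left]
          _ = (p (2 * k - 1 - 2 * 0))⁻¹ * (p (2 * k - 2 - 2 * 0) * x) := by rw [e2]
          _ = ((p (2 * k - 1 - 2 * 0))⁻¹ * p (2 * k - 2 - 2 * 0)) * x := by
                rw [mul_assoc]
      | succ j ih =>
        intro hj
        obtain ⟨x', hx', hrx'⟩ := ih (by omega)
        obtain ⟨x, hx, hgx⟩ := h (j + 1) hj
        rw [hL j] at hgx ⊢
        have c1 : γ x' = γ (f (j + 1)) * γ x := by
          apply mul_left_cancel (a := γ (((List.range (j + 1)).map f).prod))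
          rw [← map_mul, ← hrx', hgx, map_mul, mul_assoc]
        have e1 : γ (p (2 * k - 1 - 2 * (j + 1)) * x')
            = γ (p (2 * k - 2 - 2 * (j + 1)) * x) := by
          rw [map_mul, map_mul, c1]
          simp only [hfdef, map_mul, map_inv]
          group
        have e2 : p (2 * k - 1 - 2 * (j + 1)) * x' = p (2 * k - 2 - 2 * (j + 1)) * x :=
          hγ (mul_mem (hp _ (by omega)) hx') (mul_mem (hp _ (by omega)) hx) e1
        have hx'eq : x' = f (j + 1) * x := by
          rw [hfdef]
          calc x' = (p (2 * k - 1 - 2 * (j + 1)))⁻¹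
                * (p (2 * k - 1 - 2 * (j + 1)) * x') := by rw [inv_mul_cancel_left]
            _ = (p (2 * k - 1 - 2 * (j + 1)))⁻¹
                * (p (2 * k - 2 - 2 * (j + 1)) * x) := by rw [e2]
            _ = ((p (2 * k - 1 - 2 * (j + 1)))⁻¹ * p (2 * k - 2 - 2 * (j + 1))) * x := by
                rw [mul_assoc]
        refine ⟨x, hx, ?_⟩
        rw [hrx', hx'eq]
        simp only [hfdef]
        group
    exact key
  · intro h j hj
    obtain ⟨x, hx, hrx⟩ := h j hj
    exact ⟨x, hx, by rw [hrx, map_mul]⟩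
end

section
/- Let G and H be groups, P a unital subsemigroup of G, and γ : G → H a group homomorphism injective on P. Let p₁,…,p_{2k} ∈ P with γ(p₁)γ(p₂)⁻¹···γ(p_{2k-1})γ(p_{2k})⁻¹ = e_H but p₁p₂⁻¹···p_{2k-1}p_{2k}⁻¹ ≠ e_G. Set F = {p_{2k}⁻¹p_{2k-1}, …, p_{2k}⁻¹p_{2k-1}p_{2k-2}⁻¹···p₃⁻¹p₂} ⊆ G. Then K_F = ⋂_{g∈F} gP is empty. -/
private lemma key_word {G : Type*} [Group G] (p : ℕ → G) (k : ℕ) :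
    (((List.range (k+1)).map fun i => p (2*i) * (p (2*i+1))⁻¹).prod)
      * (p (2*k+1) * ((List.range k).map fun i =>
          (p (2*k-2*i))⁻¹ * p (2*k-1-2*i)).prod) = p 0 := by
  induction k with
  | zero => simp [List.range_succ, mul_assoc]
  | succ n ih =>
      rw [List.range_succ (n := n+1)]
      nth_rewrite 2 [List.range_succ_eq_map]
      simp only [List.map_append, List.map_cons, List.prod_append, List.prod_cons,
        List.map_map, List.map_nil, List.prod_nil]
      have hfun : ((fun i => (p (2*(n+1)-2*i))⁻¹ * p (2*(n+1)-1-2*i)) ∘ Nat.succ)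
          = fun i => (p (2*n-2*i))⁻¹ * p (2*n-1-2*i) := by
        funext i
        simp only [Function.comp, Nat.succ_eq_add_one]
        rw [show 2*(n+1)-2*(i+1) = 2*n-2*i by omega,
            show 2*(n+1)-1-2*(i+1) = 2*n-1-2*i by omega]
      rw [hfun, show 2*(n+1)-2*0 = 2*(n+1) by omega,
          show 2*(n+1)-1-2*0 = 2*n+1 by omega, ← ih]
      group

/-- Let `γ : G → H` be a group homomorphism injective on a unital
subsemigroup `P ⊆ G`, and let `p₁, …, p_{2k} ∈ P` (here `p i` is `p_{i+1}`) with
`γ(p₁)γ(p₂)⁻¹⋯γ(p_{2k-1})γ(p_{2k})⁻¹ = e_H` but `p₁p₂⁻¹⋯p_{2k-1}p_{2k}⁻¹ ≠ e_G`.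
With `F = {p_{2k}, p_{2k}p_{2k-1}⁻¹p_{2k-2}, …, p_{2k}p_{2k-1}⁻¹⋯p₃⁻¹p₂}`
(the finite set associated to the word `(p₁,…,p_{2k})`), the set
`K_F = ⋂_{g ∈ F} gP` is empty. -/
theorem K_F_empty {G H : Type*} [Group G] [Group H] (P : Submonoid G)
    (γ : G →* H) (hγ : Set.InjOn γ (P : Set G)) (k : ℕ) (p : ℕ → G)
    (hp : ∀ i < 2 * k, p i ∈ P)
    (hH : (((List.range k).map fun i =>
        γ (p (2 * i)) * (γ (p (2 * i + 1)))⁻¹).prod) = 1)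
    (hG : (((List.range k).map fun i =>
        p (2 * i) * (p (2 * i + 1))⁻¹).prod) ≠ 1) :
    (⋂ j ∈ Finset.range k,
        {y : G | ∃ x ∈ P,
          y = (p (2 * k - 1) * ((List.range j).map fun i =>
            (p (2 * k - 2 - 2 * i))⁻¹ * p (2 * k - 3 - 2 * i)).prod) * x}) = ∅ := by
  obtain _ | k' := k
  · exact absurd (by simp) hG
  set k := k' + 1 with hk
  rw [Set.eq_empty_iff_forall_notMem]
  intro y hy
  simp only [Set.mem_iInter, Finset.mem_range, Set.mem_setOf_eq] at hy
  -- from j = 0 : y ∈ P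
  obtain ⟨x0, hx0, hy0⟩ := hy 0 (by omega)
  simp only [List.range_zero, List.map_nil, List.prod_nil, mul_one] at hy0
  have hyP : y ∈ P := hy0 ▸ mul_mem (hp _ (by omega)) hx0
  -- from j = k - 1
  obtain ⟨x, hx, hyx⟩ := hy k' (by omega)
  set w : G := ((List.range k).map fun i => p (2 * i) * (p (2 * i + 1))⁻¹).prod with hw
  set g : G := p (2 * k - 1) * ((List.range k').map fun i =>
      (p (2 * k - 2 - 2 * i))⁻¹ * p (2 * k - 3 - 2 * i)).prod with hg
  -- key identity : w * g = p 0
  have hkey : w * g = p 0 := by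
    have h := key_word p k'
    have hfun : (fun i => (p (2 * k - 2 - 2 * i))⁻¹ * p (2 * k - 3 - 2 * i))
        = fun i => (p (2*k'-2*i))⁻¹ * p (2*k'-1-2*i) := by
      funext i
      rw [show 2 * k - 2 - 2 * i = 2*k'-2*i by omega,
          show 2 * k - 3 - 2 * i = 2*k'-1-2*i by omega]
    rw [hw, hg, show 2 * k - 1 = 2 * k' + 1 by omega, hfun]
    exact h
  -- γ(w) = 1
  have hγw : γ w = 1 := by
    rw [hw, map_list_prod, List.map_map]
    simp only [Function.comp_def, map_mul, map_inv]
    exact hH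
  -- γ(g) = γ(p 0)
  have hγg : γ g = γ (p 0) := by
    have := congrArg γ hkey
    rwa [map_mul, hγw, one_mul] at this
  -- y = p 0 * x by injectivity
  have hmem : p 0 * x ∈ P := mul_mem (hp _ (by omega)) hx
  have hyeq : y = p 0 * x := by
    apply hγ hyP hmem
    rw [hyx, map_mul, hγg, map_mul]
  -- conclude w = 1
  apply hG
  have hginv : g⁻¹ = x * y⁻¹ := by rw [hyx]; group
  calc w = p 0 * g⁻¹ := by rw [← hkey]; group
    _ = p 0 * (x * y⁻¹) := by rw [hginv]
    _ = (p 0 * x) * y⁻¹ := by group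
    _ = y * y⁻¹ := by rw [← hyeq]
    _ = 1 := by group
end

section
/- Let P be a right reversible unital subsemigroup of a group G, meaning G = P P⁻¹. Then for every finite list g₁,…,gₙ of elements of G there exists s ∈ P such that g_i s ∈ P for all i; equivalently, the set ⋂_{i=1}^{n} g_i⁻¹ P ∩ P is nonempty. -/
/-- Let `P` be a unital subsemigroup of a group `G` with `G = PP⁻¹`
(right reversibility).  Then for every finite subset `F ⊆ G` there is `s ∈ P` with
`g * s ∈ P` for all `g ∈ F`; equivalently `⋂_{g ∈ F} g⁻¹P ∩ P ≠ ∅`. -/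
theorem exists_common_translate {G : Type*} [Group G] (P : Submonoid G)
    (hrev : ∀ g : G, ∃ p ∈ P, ∃ q ∈ P, g = p * q⁻¹) (F : Finset G) :
    ∃ s ∈ P, ∀ g ∈ F, g * s ∈ P := by
  classical
  induction F using Finset.induction with
  | empty => exact ⟨1, P.one_mem, by simp⟩
  | @insert a F ha ih =>
    obtain ⟨s, hs, hF⟩ := ih
    obtain ⟨p, hp, q, hq, hpq⟩ := hrev (a * s)
    refine ⟨s * q, P.mul_mem hs hq, ?_⟩
    intro g hgmem
    rcases Finset.mem_insert.mp hgmem with rfl | h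
    · have : g * (s * q) = p := by rw [← mul_assoc, hpq]; group
      rw [this]; exact hp
    · rw [← mul_assoc]; exact P.mul_mem (hF g h) hq
end

section
/- Let B be a C*-algebra, J ⊆ B a closed two-sided ideal, and Z ⊆ B a closed subspace such that Z* Z ⊆ J. Then Z ⊆ closure(Z·J); in particular, if C is another closed subspace with Z·J ⊆ C·J then Z ⊆ closure(C·J). -/
/-!
For `z ∈ Z` put `a = z⋆z ∈ J` and `e = f(a)` with `f(t) = t² / (t² + δ²)`. Since `f(0) = 0`,
`f(t) = t · g(t)` with `g(0) = 0`, so `e = a · g(a) ∈ J`. The C⋆-identity turns `‖z - z e‖²`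
into the norm of `(t ↦ t (1 - f t)²)(a)`, and `|t| δ⁴ ≤ δ (t² + δ²)²` for every real `t`;
hence `z e → z` as `δ → 0`.
-/
lemma norm_mul_one_sub_sq_div_sq_add_sq_sq_le {δ : ℝ} (hδ : 0 < δ) (t : ℝ) :
    ‖t * (1 - t ^ 2 / (t ^ 2 + δ ^ 2)) ^ 2‖ ≤ δ := by
  have hsub : 1 - t ^ 2 / (t ^ 2 + δ ^ 2) = δ ^ 2 / (t ^ 2 + δ ^ 2) := by
    field_simp; ring
  rw [hsub, norm_mul, norm_pow, Real.norm_eq_abs, Real.norm_of_nonneg (by positivity), div_pow,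
    mul_div_assoc', div_le_iff₀ (by positivity)]
  have amgm : 2 * |t| * δ ≤ t ^ 2 + δ ^ 2 := by nlinarith [sq_nonneg (|t| - δ), sq_abs t]
  calc |t| * (δ ^ 2) ^ 2 ≤ δ * (2 * |t| * δ) * δ ^ 2 := by nlinarith [abs_nonneg t, pow_pos hδ 4]
    _ ≤ δ * (t ^ 2 + δ ^ 2) * (t ^ 2 + δ ^ 2) := by gcongr; nlinarith
    _ = δ * (t ^ 2 + δ ^ 2) ^ 2 := by ring

section
variable {A : Type*} [NonUnitalCStarAlgebra A]

lemma star_sub_mul_cfcₙ_mul_sub_mul_cfcₙ (x : A) {f : ℝ → ℝ} (hf : Continuous f)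
    (hf0 : f 0 = 0) :
    star (x - x * cfcₙ f (star x * x)) * (x - x * cfcₙ f (star x * x)) =
      cfcₙ (fun t => t * (1 - f t) ^ 2) (star x * x) := by
  set a := star x * x
  set e := cfcₙ f a
  have he : star e = e := (IsSelfAdjoint.cfcₙ (f := f) (a := a)).star_eq
  calc star (x - x * e) * (x - x * e) = a - a * e - e * a + e * a * e := by
        rw [star_sub, star_mul, he]; simp only [a]; noncomm_ring
    _ = cfcₙ (fun t => t - t * f t - f t * t + f t * t * f t) a := by
        rw [cfcₙ_add .., cfcₙ_sub .., cfcₙ_sub .., cfcₙ_mul .., cfcₙ_mul .., cfcₙ_mul _ f ..,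
          cfcₙ_mul .., cfcₙ_id' ℝ a]
    _ = cfcₙ (fun t => t * (1 - f t) ^ 2) a := cfcₙ_congr fun t _ => by ring

lemma exists_norm_sub_mul_star_mul_self_mul_lt (x : A) {ε : ℝ} (hε : 0 < ε) :
    ∃ b : A, ‖x - x * (star x * x * b)‖ < ε := by
  set a := star x * x
  set δ := ε ^ 2 / 2
  have hδ : 0 < δ := by positivity
  let f : ℝ → ℝ := fun t => t ^ 2 / (t ^ 2 + δ ^ 2)
  let g : ℝ → ℝ := fun t => t / (t ^ 2 + δ ^ 2)
  have hf : Continuous f := by fun_prop (disch := intro t; positivity)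
  have hg : Continuous g := by fun_prop (disch := intro t; positivity)
  have hfg : cfcₙ f a = a * cfcₙ g a := calc
    cfcₙ f a = cfcₙ (fun t => t * g t) a := cfcₙ_congr fun t _ => by simp only [f, g]; ring
    _ = a * cfcₙ g a := by rw [cfcₙ_mul .., cfcₙ_id' ℝ a]
  refine ⟨cfcₙ g a, ?_⟩
  have hsq : ‖x - x * cfcₙ f a‖ ^ 2 ≤ δ := by
    rw [sq, ← CStarRing.norm_star_mul_self, star_sub_mul_cfcₙ_mul_sub_mul_cfcₙ x hf (by simp [f])]
    exact norm_cfcₙ_le fun t _ => norm_mul_one_sub_sq_div_sq_add_sq_sq_le hδ t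
  rw [← hfg]
  exact lt_of_pow_lt_pow_left₀ 2 hε.le (hsq.trans_lt (half_lt_self (by positivity)))

lemma mem_closure_range_mul_star_mul_self_mul (x : A) :
    x ∈ closure (Set.range fun b => x * (star x * x * b)) :=
  Metric.mem_closure_range_iff.mpr fun ε hε => by
    simpa only [dist_eq_norm] using exists_norm_sub_mul_star_mul_self_mul_lt x hε

end

theorem subset_closure_mul_ideal_general {B : Type*} [NonUnitalNormedRing B] [StarRing B]
    [CStarRing B] [NormedSpace ℂ B] [IsScalarTower ℂ B B] [SMulCommClass ℂ B B]
    [StarModule ℂ B] [CompleteSpace B]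
    (J : TwoSidedIdeal B)
    (Z : Submodule ℂ B)
    (hZJ : ∀ z₁ ∈ Z, ∀ z₂ ∈ Z, star z₁ * z₂ ∈ J) :
    (Z : Set B) ⊆
        closure (Submodule.span ℂ {x : B | ∃ z ∈ Z, ∃ j ∈ J, x = z * j} : Set B) ∧
      ∀ C : Submodule ℂ B, IsClosed (C : Set B) →
        Submodule.span ℂ {x : B | ∃ z ∈ Z, ∃ j ∈ J, x = z * j} ≤
          Submodule.span ℂ {x : B | ∃ c ∈ C, ∃ j ∈ J, x = c * j} →
        (Z : Set B) ⊆
          closure (Submodule.span ℂ {x : B | ∃ c ∈ C, ∃ j ∈ J, x = c * j} : Set B) := by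
  let _ : NonUnitalCStarAlgebra B := {}
  have hZsub : (Z : Set B) ⊆
      closure (Submodule.span ℂ {x : B | ∃ z ∈ Z, ∃ j ∈ J, x = z * j} : Set B) := by
    intro z hz
    refine closure_mono ?_ (mem_closure_range_mul_star_mul_self_mul z)
    rintro _ ⟨b, rfl⟩
    exact Submodule.subset_span ⟨z, hz, _, J.mul_mem_right _ b (hZJ z hz z hz), rfl⟩
  exact ⟨hZsub, fun C _ hle => hZsub.trans (closure_mono (SetLike.coe_subset_coe.mpr hle))⟩

/-- Let `B` be a C*-algebra, `J ⊆ B` a closed two-sided ideal and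
`Z ⊆ B` a closed subspace with `Z* Z ⊆ J`.  Then `Z ⊆ closure (Z·J)`; in particular,
if `C` is another closed subspace with `Z·J ⊆ C·J`, then `Z ⊆ closure (C·J)`.
Here `X·J` denotes the linear span of products `x*j`, `x ∈ X`, `j ∈ J`. -/
theorem subset_closure_mul_ideal {B : Type*} [NonUnitalNormedRing B] [StarRing B]
    [CStarRing B] [NormedSpace ℂ B] [IsScalarTower ℂ B B] [SMulCommClass ℂ B B]
    [StarModule ℂ B] [CompleteSpace B]
    (J : TwoSidedIdeal B) (hJ : IsClosed (J : Set B))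
    (Z : Submodule ℂ B) (hZ : IsClosed (Z : Set B))
    (hZJ : ∀ z₁ ∈ Z, ∀ z₂ ∈ Z, star z₁ * z₂ ∈ J) :
    (Z : Set B) ⊆
        closure (Submodule.span ℂ {x : B | ∃ z ∈ Z, ∃ j ∈ J, x = z * j} : Set B) ∧
      ∀ C : Submodule ℂ B, IsClosed (C : Set B) →
        Submodule.span ℂ {x : B | ∃ z ∈ Z, ∃ j ∈ J, x = z * j} ≤
          Submodule.span ℂ {x : B | ∃ c ∈ C, ∃ j ∈ J, x = c * j} →
        (Z : Set B) ⊆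
          closure (Submodule.span ℂ {x : B | ∃ c ∈ C, ∃ j ∈ J, x = c * j} : Set B) :=
  subset_closure_mul_ideal_general J Z hZJ
end

section
/- Let (π, v) be a covariant representation of an interaction group (A, G, V) in a unital C*-algebra B, with π faithful, and let p ∈ G be such that v_p* v_p = 1. Then V_{p⁻¹}(V_p(a)) = a for all a ∈ A. -/
/-- Let `(π, v)` be a covariant representation of an interaction group
`(A, G, V)` in a unital C*-algebra `B`, with `π` faithful, and let `p ∈ G` be such that
`v p` is an isometry (`(v p)* (v p) = 1`).  Then `V p⁻¹ (V p a) = a` for all `a ∈ A`. -/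
theorem isometry_implies_left_inverse {G : Type*} [Group G]
    {A : Type*} [NormedRing A] [StarRing A] [CStarRing A] [NormedAlgebra ℂ A]
    [StarModule ℂ A] [PartialOrder A] [StarOrderedRing A] [CompleteSpace A]
    {B : Type*} [NormedRing B] [StarRing B] [CStarRing B] [NormedAlgebra ℂ B]
    [StarModule ℂ B] [CompleteSpace B]
    -- the interaction group (A, G, V):
    (V : G → (A →L[ℂ] A))
    (hV1 : V 1 = ContinuousLinearMap.id ℂ A)
    (hV2 : ∀ g h : G, (V g).comp ((V h).comp (V h⁻¹)) = (V (g * h)).comp (V h⁻¹))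
    (hV3 : ∀ g h : G, (V g⁻¹).comp ((V g).comp (V h)) = (V g⁻¹).comp (V (g * h)))
    (hVpos : ∀ g : G, ∀ a : A, 0 ≤ a → 0 ≤ V g a)
    (hVunit : ∀ g : G, V g (1 : A) = 1)
    (hVmul : ∀ g : G, ∀ a b : A,
      (a ∈ Set.range (V g⁻¹) ∨ b ∈ Set.range (V g⁻¹)) → V g (a * b) = V g a * V g b)
    -- the covariant representation (π, v):
    (π : A →⋆ₐ[ℂ] B) (hπ : Function.Injective π)
    (v : G → B) (hv1 : v 1 = 1)
    (hv2 : ∀ g h : G, v g * v h * v h⁻¹ = v (g * h) * v h⁻¹)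
    (hvstar : ∀ g : G, star (v g) = v g⁻¹)
    (hcov : ∀ (g : G) (a : A), v g * π a * v g⁻¹ = π (V g a) * (v g * v g⁻¹))
    (p : G) (hp : star (v p) * v p = 1) :
    ∀ a : A, V p⁻¹ (V p a) = a := by
  intro a
  apply hπ
  have hinv : v p⁻¹ * v p = 1 := by rw [← hvstar p]; exact hp
  have h1 := hcov p a
  have h2 := hcov p⁻¹ (V p a)
  rw [inv_inv, hinv, mul_one] at h2
  rw [← h2]; symm
  calc π a = (v p⁻¹ * v p) * π a * (v p⁻¹ * v p) := by rw [hinv]; simp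
    _ = v p⁻¹ * (v p * π a * v p⁻¹) * v p := by noncomm_ring
    _ = v p⁻¹ * (π (V p a) * (v p * v p⁻¹)) * v p := by rw [h1]
    _ = v p⁻¹ * π (V p a) * (v p * (v p⁻¹ * v p)) := by noncomm_ring
    _ = v p⁻¹ * π (V p a) * v p := by rw [hinv, mul_one]
end

section
/- Let (A, G, V) be an interaction group extending an action α : P → End(A) of a subsemigroup P ⊆ G by unital endomorphisms, with V_p = α_p and V_{p⁻¹} ∘ α_p = id_A for all p ∈ P. Then for all p, q ∈ P and a₀, a₁, b₀, b₁ ∈ A the identity V_{q⁻¹}( b₀* · V_{p⁻¹}(a₀* a₁) · b₁ ) = V_{(pq)⁻¹}( α_p(b₀)* · a₀* a₁ · α_p(b₁) ) holds. -/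
/-- Let `(A, G, V)` be an interaction group extending an action
`α : P → End(A)` of a unital subsemigroup `P ⊆ G` by unital endomorphisms, i.e.
`V p = α p` is multiplicative for `p ∈ P` and `V p⁻¹ ∘ α p = id`.  Then for all
`p, q ∈ P` and `a₀, a₁, b₀, b₁ ∈ A`:
`V q⁻¹ (b₀* · V p⁻¹ (a₀* a₁) · b₁) = V (pq)⁻¹ (α_p(b₀)* · a₀* a₁ · α_p(b₁))`. -/
theorem interaction_inner_product_identity {G : Type*} [Group G]
    {A : Type*} [NormedRing A] [StarRing A] [CStarRing A] [NormedAlgebra ℂ A]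
    [StarModule ℂ A] [PartialOrder A] [StarOrderedRing A] [CompleteSpace A]
    (P : Submonoid G) (V : G → (A →L[ℂ] A))
    (hV1 : V 1 = ContinuousLinearMap.id ℂ A)
    (hV2 : ∀ g h : G, (V g).comp ((V h).comp (V h⁻¹)) = (V (g * h)).comp (V h⁻¹))
    (hV3 : ∀ g h : G, (V g⁻¹).comp ((V g).comp (V h)) = (V g⁻¹).comp (V (g * h)))
    (hVpos : ∀ g : G, ∀ a : A, 0 ≤ a → 0 ≤ V g a)
    (hVunit : ∀ g : G, V g (1 : A) = 1)
    (hVstar : ∀ (g : G) (a : A), V g (star a) = star (V g a))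
    (hVmul : ∀ g : G, ∀ a b : A,
      (a ∈ Set.range (V g⁻¹) ∨ b ∈ Set.range (V g⁻¹)) → V g (a * b) = V g a * V g b)
    -- V extends the action α of P by unital endomorphisms (α p = V p):
    (hmulP : ∀ p ∈ P, ∀ a b : A, V p (a * b) = V p a * V p b)
    (hinvP : ∀ p ∈ P, ∀ a : A, V p⁻¹ (V p a) = a) :
    ∀ p ∈ P, ∀ q ∈ P, ∀ a₀ a₁ b₀ b₁ : A,
      V q⁻¹ (star b₀ * V p⁻¹ (star a₀ * a₁) * b₁) =
        V (p * q)⁻¹ (star (V p b₀) * (star a₀ * a₁) * V p b₁) := by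
  intro p hp q hq a₀ a₁ b₀ b₁
  have key : ∀ a : A, V (p * q)⁻¹ a = V q⁻¹ (V p⁻¹ a) := by
    intro a
    have h := DFunLike.congr_fun (hV3 q (p * q)⁻¹) a
    simp only [ContinuousLinearMap.comp_apply] at h
    rw [hinvP q hq] at h
    have hq' : q * (p * q)⁻¹ = p⁻¹ := by group
    rw [hq'] at h
    exact h
  have step : V p⁻¹ (star (V p b₀) * (star a₀ * a₁) * V p b₁)
      = star b₀ * V p⁻¹ (star a₀ * a₁) * b₁ := by
    rw [← hVstar p b₀]
    rw [hVmul p⁻¹ (V p (star b₀) * (star a₀ * a₁)) (V p b₁)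
      (Or.inr (by rw [inv_inv]; exact ⟨b₁, rfl⟩))]
    rw [hVmul p⁻¹ (V p (star b₀)) (star a₀ * a₁)
      (Or.inl (by rw [inv_inv]; exact ⟨star b₀, rfl⟩))]
    rw [hinvP p hp, hinvP p hp]
  rw [key, step]
end
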